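/- Let μ > 0, γ ∈ (0,1), n_h ∈ (0,1), n_c = 1 − n_h, and let r̄, p̄^h, p̄^c be as defined; set p̄_n = n_c·p̄^c_n + n_h·p̄^h_n. Then the Gini index of p̄ satisfies G[p̄] = 1 − (1/μ)·[ n_c²·r̄²/((1−γ)² − r̄²) + n_h²·r̄²/(1 − r̄²) + 2·n_c·n_h·r̄²/(1−γ − r̄²) ]. -/

import Mathlib

/-- The equilibrium rate `r̄`. -/
noncomputable def rbar (μ γ nh : ℝ) : ℝ :=
  ((2 - γ) * μ + (1 - γ * nh) -
      Real.sqrt (((2 - γ) * μ + (1 - γ * nh)) ^ 2 - 4 * (1 - γ) * (μ + 1) * μ)) /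
    (2 * (μ + 1))

/-- The equilibrium distribution of honest players: geometric with parameter `r̄`. -/
noncomputable def pbarh (μ γ nh : ℝ) (n : ℕ) : ℝ :=
  (1 - rbar μ γ nh) * rbar μ γ nh ^ n

/-- The equilibrium distribution of probabilistic cheaters: geometric with
parameter `r̄/(1−γ)`. -/
noncomputable def pbarc (μ γ nh : ℝ) (n : ℕ) : ℝ :=
  (1 - rbar μ γ nh / (1 - γ)) * (rbar μ γ nh / (1 - γ)) ^ n

/-- The equilibrium wealth distribution of the whole population: the mixture
`p̄ = n_c·p̄^c + n_h·p̄^h`. -/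
noncomputable def pbar (μ γ nh : ℝ) (n : ℕ) : ℝ :=
  (1 - nh) * pbarc μ γ nh n + nh * pbarh μ γ nh n

section AuxTsum

lemma tsum_ite_gt {y : ℝ} (hy0 : 0 ≤ y) (hy1 : y < 1) (k : ℕ) :
    ∑' j : ℕ, (if k < j then y ^ j else 0) = y ^ (k + 1) / (1 - y) := by
  have hinj : Function.Injective (fun n : ℕ => n + (k + 1)) := add_left_injective (k + 1)
  have hsupp : Function.support (fun j : ℕ => if k < j then y ^ j else 0)
      ⊆ Set.range (fun n : ℕ => n + (k + 1)) := by
    intro j hj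
    by_cases h : k < j
    · exact ⟨j - (k + 1), by simp; omega⟩
    · simp [h] at hj
  rw [← Function.Injective.tsum_eq hinj hsupp]
  have hpt : ∀ n : ℕ, (if k < n + (k + 1) then y ^ (n + (k + 1)) else 0) = y ^ n * y ^ (k + 1) := by
    intro n; rw [if_pos (by omega), pow_add]
  rw [tsum_congr hpt, tsum_mul_right, tsum_geometric_of_lt_one hy0 hy1]
  have h1 : (1 : ℝ) - y ≠ 0 := by linarith
  field_simp

lemma summable_ite_gt {y : ℝ} (hy0 : 0 ≤ y) (hy1 : y < 1) (k : ℕ) :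
    Summable (fun j : ℕ => if k < j then y ^ j else 0) := by
  apply Summable.of_nonneg_of_le _ _ (summable_geometric_of_lt_one hy0 hy1)
  · intro j; split <;> positivity
  · intro j; split
    · exact le_refl _
    · positivity

lemma tsum_min_geom {y : ℝ} (hy0 : 0 ≤ y) (hy1 : y < 1) (i : ℕ) :
    ∑' j : ℕ, ((min i j : ℕ) : ℝ) * y ^ j = y * (1 - y ^ i) / (1 - y) ^ 2 := by
  have hy' : y ≠ 1 := ne_of_lt hy1
  have h1 : (1 : ℝ) - y ≠ 0 := by linarith
  have key : ∀ j : ℕ, ((min i j : ℕ) : ℝ) * y ^ j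
      = ∑ k ∈ Finset.range i, (if k < j then y ^ j else 0) := by
    intro j
    rw [← Finset.sum_filter]
    have h2 : (Finset.range i).filter (fun k => k < j) = Finset.range (min i j) := by
      ext k; simp [Nat.lt_min]
    rw [h2, Finset.sum_const, Finset.card_range, nsmul_eq_mul]
  rw [tsum_congr key, Summable.tsum_finsetSum (fun k _ => summable_ite_gt hy0 hy1 k)]
  have hval : ∀ k ∈ Finset.range i, (∑' j : ℕ, if k < j then y ^ j else 0)
      = y ^ k * (y / (1 - y)) := by
    intro k _
    rw [tsum_ite_gt hy0 hy1 k, pow_succ]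
    ring
  rw [Finset.sum_congr rfl hval, ← Finset.sum_mul, geom_sum_eq hy', div_mul_div_comm,
    div_eq_div_iff (by intro h; apply h1; nlinarith [sq_nonneg (1 - y)]) (by positivity)]
  ring

lemma summable_id_geom {y : ℝ} (hy0 : 0 ≤ y) (hy1 : y < 1) :
    Summable (fun j : ℕ => (j : ℝ) * y ^ j) := by
  have := summable_pow_mul_geometric_of_norm_lt_one (R := ℝ) (r := y) 1
    (by rwa [Real.norm_eq_abs, abs_of_nonneg hy0])
  simpa using this

lemma summable_abs_geom {y : ℝ} (hy0 : 0 ≤ y) (hy1 : y < 1) (i : ℕ) :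
    Summable (fun j : ℕ => |(i : ℝ) - j| * y ^ j) := by
  refine Summable.of_nonneg_of_le (fun j => by positivity) (fun j => ?_)
    (((summable_geometric_of_lt_one hy0 hy1).mul_left (i:ℝ)).add (summable_id_geom hy0 hy1))
  have h1 : |(i : ℝ) - j| ≤ (i : ℝ) + j := by
    have hi : (0:ℝ) ≤ (i:ℝ) := by positivity
    have hj : (0:ℝ) ≤ (j:ℝ) := by positivity
    rw [abs_sub_le_iff]; constructor <;> linarith
  have h2 : (0:ℝ) ≤ y ^ j := by positivity
  nlinarith

lemma summable_min_geom {y : ℝ} (hy0 : 0 ≤ y) (hy1 : y < 1) (i : ℕ) :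
    Summable (fun j : ℕ => 2 * (((min i j : ℕ) : ℝ) * y ^ j)) := by
  apply Summable.mul_left
  refine Summable.of_nonneg_of_le (fun j => by positivity) (fun j => ?_)
    (summable_id_geom hy0 hy1)
  have h2 : (0:ℝ) ≤ y ^ j := by positivity
  have h3 : ((min i j : ℕ) : ℝ) ≤ (j : ℝ) := by exact_mod_cast Nat.cast_le.mpr (min_le_right i j)
  nlinarith

lemma tsum_abs_geom {y : ℝ} (hy0 : 0 ≤ y) (hy1 : y < 1) (i : ℕ) :
    ∑' j : ℕ, |(i : ℝ) - j| * y ^ j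
      = (i : ℝ) * (1 - y)⁻¹ + y / (1 - y) ^ 2 - 2 * (y * (1 - y ^ i) / (1 - y) ^ 2) := by
  have hpt : ∀ j : ℕ, |(i : ℝ) - j| * y ^ j
      = ((i : ℝ) * y ^ j + (j : ℝ) * y ^ j) - 2 * (((min i j : ℕ) : ℝ) * y ^ j) := by
    intro j
    rcases le_total i j with h | h
    · have hc : ((min i j : ℕ) : ℝ) = (i : ℝ) := by rw [min_eq_left h]
      have hc2 : (i : ℝ) ≤ (j : ℝ) := by exact_mod_cast h
      rw [hc, abs_of_nonpos (by linarith)]; ring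
    · have hc : ((min i j : ℕ) : ℝ) = (j : ℝ) := by rw [min_eq_right h]
      have hc2 : (j : ℝ) ≤ (i : ℝ) := by exact_mod_cast h
      rw [hc, abs_of_nonneg (by linarith)]; ring
  have S1 : Summable (fun j : ℕ => (i : ℝ) * y ^ j) :=
    (summable_geometric_of_lt_one hy0 hy1).mul_left _
  have S2 := summable_id_geom hy0 hy1
  rw [tsum_congr hpt, Summable.tsum_sub (S1.add S2) (summable_min_geom hy0 hy1 i), Summable.tsum_add S1 S2,
    tsum_mul_left, tsum_mul_left, tsum_geometric_of_lt_one hy0 hy1,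
    tsum_coe_mul_geometric_of_norm_lt_one (by rwa [Real.norm_eq_abs, abs_of_nonneg hy0]),
    tsum_min_geom hy0 hy1 i]

lemma summable_outer {t u v : ℝ} (ht0 : 0 ≤ t) (ht1 : t < 1) (hu0 : 0 ≤ u) (hu1 : u < 1)
    (hv0 : 0 ≤ v) (hv1 : v < 1) (c1 c0 c2 c3 : ℝ) :
    Summable (fun i : ℕ => t ^ i * (c1 * i + c0 + c2 * u ^ i + c3 * v ^ i)) := by
  have htu1 : t * u < 1 := by nlinarith
  have htv1 : t * v < 1 := by nlinarith
  have hpt : ∀ i : ℕ, t ^ i * (c1 * i + c0 + c2 * u ^ i + c3 * v ^ i)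
      = c1 * ((i : ℝ) * t ^ i) + c0 * t ^ i + c2 * (t * u) ^ i + c3 * (t * v) ^ i := by
    intro i; rw [mul_pow, mul_pow]; ring
  apply Summable.congr _ (fun i => (hpt i).symm)
  exact ((((summable_id_geom ht0 ht1).mul_left c1).add
      ((summable_geometric_of_lt_one ht0 ht1).mul_left c0)).add
      ((summable_geometric_of_lt_one (by positivity) htu1).mul_left c2)).add
      ((summable_geometric_of_lt_one (by positivity) htv1).mul_left c3)

lemma tsum_outer {t u v : ℝ} (ht0 : 0 ≤ t) (ht1 : t < 1) (hu0 : 0 ≤ u) (hu1 : u < 1)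
    (hv0 : 0 ≤ v) (hv1 : v < 1) (c1 c0 c2 c3 : ℝ) :
    ∑' i : ℕ, t ^ i * (c1 * i + c0 + c2 * u ^ i + c3 * v ^ i)
      = c1 * (t / (1 - t) ^ 2) + c0 * (1 - t)⁻¹ + c2 * (1 - t * u)⁻¹ + c3 * (1 - t * v)⁻¹ := by
  have htu1 : t * u < 1 := by nlinarith
  have htv1 : t * v < 1 := by nlinarith
  have hpt : ∀ i : ℕ, t ^ i * (c1 * i + c0 + c2 * u ^ i + c3 * v ^ i)
      = c1 * ((i : ℝ) * t ^ i) + c0 * t ^ i + c2 * (t * u) ^ i + c3 * (t * v) ^ i := by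
    intro i; rw [mul_pow, mul_pow]; ring
  have S1 : Summable (fun i : ℕ => c1 * ((i : ℝ) * t ^ i)) :=
    (summable_id_geom ht0 ht1).mul_left c1
  have S2 : Summable (fun i : ℕ => c0 * t ^ i) :=
    (summable_geometric_of_lt_one ht0 ht1).mul_left c0
  have S3 : Summable (fun i : ℕ => c2 * (t * u) ^ i) :=
    (summable_geometric_of_lt_one (by positivity) htu1).mul_left c2
  have S4 : Summable (fun i : ℕ => c3 * (t * v) ^ i) :=
    (summable_geometric_of_lt_one (by positivity) htv1).mul_left c3
  rw [tsum_congr hpt, Summable.tsum_add ((S1.add S2).add S3) S4, Summable.tsum_add (S1.add S2) S3, Summable.tsum_add S1 S2,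
    tsum_mul_left, tsum_mul_left, tsum_mul_left, tsum_mul_left,
    tsum_geometric_of_lt_one ht0 ht1, tsum_geometric_of_lt_one (by positivity) htu1,
    tsum_geometric_of_lt_one (by positivity) htv1,
    tsum_coe_mul_geometric_of_norm_lt_one (by rwa [Real.norm_eq_abs, abs_of_nonneg ht0])]

end AuxTsum

lemma rbar_facts (μ γ nh : ℝ) (hμ : 0 < μ) (hγ0 : 0 < γ) (hγ1 : γ < 1)
    (hnh0 : 0 < nh) (hnh1 : nh < 1) :
    0 < rbar μ γ nh ∧ rbar μ γ nh < 1 - γ ∧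
      (μ + 1) * rbar μ γ nh ^ 2 - ((2 - γ) * μ + (1 - γ * nh)) * rbar μ γ nh + (1 - γ) * μ = 0 := by
  set B : ℝ := (2 - γ) * μ + (1 - γ * nh) with hB
  set D : ℝ := B ^ 2 - 4 * (1 - γ) * (μ + 1) * μ with hD
  have hμ1 : (0:ℝ) < μ + 1 := by linarith
  have hE : D = (B - 2 * (μ + 1) * (1 - γ)) ^ 2 + 4 * (μ + 1) * (1 - γ) * γ * (1 - nh) := by
    rw [hD, hB]; ring
  have h1γ : (0:ℝ) < 1 - γ := by linarith
  have h1n : (0:ℝ) < 1 - nh := by linarith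
  have hpos : (0:ℝ) < 4 * (μ + 1) * (1 - γ) * γ * (1 - nh) := by positivity
  have hpos2 : (0:ℝ) < 4 * (1 - γ) * (μ + 1) * μ := by positivity
  have hD0 : 0 < D := by nlinarith [sq_nonneg (B - 2 * (μ + 1) * (1 - γ))]
  have hB0 : 0 < B := by rw [hB]; nlinarith
  have hDB : D < B ^ 2 := by rw [hD]; linarith
  have hsq : Real.sqrt D ^ 2 = D := Real.sq_sqrt hD0.le
  have hsD : Real.sqrt D < B := by
    have := Real.sqrt_lt_sqrt hD0.le hDB
    rwa [Real.sqrt_sq hB0.le] at this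
  have hEsD : B - 2 * (μ + 1) * (1 - γ) < Real.sqrt D := by
    have h2 : (B - 2 * (μ + 1) * (1 - γ)) ^ 2 < D := by nlinarith
    have := Real.sqrt_lt_sqrt (sq_nonneg _) h2
    rw [Real.sqrt_sq_eq_abs] at this
    calc B - 2 * (μ + 1) * (1 - γ) ≤ |B - 2 * (μ + 1) * (1 - γ)| := le_abs_self _
      _ < Real.sqrt D := this
  have ha_eq : rbar μ γ nh = (B - Real.sqrt D) / (2 * (μ + 1)) := by rw [hD, hB]; rfl
  refine ⟨?_, ?_, ?_⟩
  · rw [ha_eq]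
    apply div_pos (by linarith) (by linarith)
  · rw [ha_eq, div_lt_iff₀ (by linarith)]
    linarith
  · have h1 : 2 * (μ + 1) * rbar μ γ nh = B - Real.sqrt D := by
      rw [ha_eq]; field_simp
    have h2 : (B - 2 * (μ + 1) * rbar μ γ nh) ^ 2 = D := by
      rw [h1, show B - (B - Real.sqrt D) = Real.sqrt D from by ring]; exact hsq
    have h3 : 4 * (μ + 1) * ((μ + 1) * rbar μ γ nh ^ 2 - B * rbar μ γ nh + (1 - γ) * μ) = 0 := by
      rw [hD] at h2; linear_combination h2
    rcases mul_eq_zero.mp h3 with h4 | h4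
    · linarith
    · linarith [h4]

set_option maxHeartbeats 800000 in
/-- Pure algebraic identity for the closed-form double sum (stage 1). -/
lemma stage1 (a b nh : ℝ) (ha : 1 - a ≠ 0) (hb : 1 - b ≠ 0) (hbb : 1 - b * b ≠ 0)
    (hba : 1 - b * a ≠ 0) (hab : 1 - a * b ≠ 0) (haa : 1 - a * a ≠ 0) :
    (1 - nh) * (1 - b) * ((1 : ℝ) * (b / (1 - b) ^ 2)
        + (-((1 - nh) * (b / (1 - b)) + nh * (a / (1 - a)))) * (1 - b)⁻¹
        + (2 * (1 - nh) * (b / (1 - b))) * (1 - b * b)⁻¹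
        + (2 * nh * (a / (1 - a))) * (1 - b * a)⁻¹)
      + nh * (1 - a) * ((1 : ℝ) * (a / (1 - a) ^ 2)
        + (-((1 - nh) * (b / (1 - b)) + nh * (a / (1 - a)))) * (1 - a)⁻¹
        + (2 * (1 - nh) * (b / (1 - b))) * (1 - a * b)⁻¹
        + (2 * nh * (a / (1 - a))) * (1 - a * a)⁻¹)
      = 2 * ((1 - nh) * (b / (1 - b)) + nh * (a / (1 - a)))
        - 2 * ((1 - nh) ^ 2 * (b * b / (1 - b * b)) + nh ^ 2 * (a * a / (1 - a * a))
            + 2 * (1 - nh) * nh * (a * b / (1 - a * b))) := by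
  have hbb2 : 1 - b ^ 2 ≠ 0 := by rwa [sq]
  have haa2 : 1 - a ^ 2 ≠ 0 := by rwa [sq]
  field_simp
  ring

set_option maxHeartbeats 4000000 in
/-- closed-form expression for the Gini index
`G[p̄] = (1/(2μ))·Σ_i Σ_j |i−j|·p̄_i·p̄_j` of the equilibrium mixture distribution. -/
theorem stmt_17 (μ γ nh : ℝ) (hμ : 0 < μ) (hγ : γ ∈ Set.Ioo (0 : ℝ) 1)
    (hnh : nh ∈ Set.Ioo (0 : ℝ) 1) :
    1 / (2 * μ) * (∑' i : ℕ, ∑' j : ℕ, |(i : ℝ) - (j : ℝ)| * pbar μ γ nh i * pbar μ γ nh j) =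
      1 - 1 / μ *
        ((1 - nh) ^ 2 * rbar μ γ nh ^ 2 / ((1 - γ) ^ 2 - rbar μ γ nh ^ 2) +
          nh ^ 2 * rbar μ γ nh ^ 2 / (1 - rbar μ γ nh ^ 2) +
          2 * (1 - nh) * nh * rbar μ γ nh ^ 2 / (1 - γ - rbar μ γ nh ^ 2)) := by
  obtain ⟨hγ0, hγ1⟩ := hγ
  obtain ⟨hnh0, hnh1⟩ := hnh
  obtain ⟨ha0, hax, hQ⟩ := rbar_facts μ γ nh hμ hγ0 hγ1 hnh0 hnh1
  set a := rbar μ γ nh with ha_def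
  have h1γ : (0:ℝ) < 1 - γ := by linarith
  set b : ℝ := a / (1 - γ) with hb_def
  have ha0' : (0:ℝ) ≤ a := ha0.le
  have ha1 : a < 1 := by linarith
  have hb0 : (0:ℝ) ≤ b := by rw [hb_def]; positivity
  have hb1 : b < 1 := by rw [hb_def, div_lt_one h1γ]; linarith
  have h1a : (0:ℝ) < 1 - a := by linarith
  have h1b : (0:ℝ) < 1 - b := by linarith
  have hga : (0:ℝ) < 1 - γ - a := by linarith
  have hd2 : (0:ℝ) < 1 - b * b := by nlinarith [hb0, hb1]
  have hd3 : (0:ℝ) < 1 - b * a := by nlinarith [hb0, hb1, ha0', ha1]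
  have hd3' : (0:ℝ) < 1 - a * b := by nlinarith [hb0, hb1, ha0', ha1]
  have hd4 : (0:ℝ) < 1 - a * a := by nlinarith [ha0', ha1]
  have hd5 : (0:ℝ) < (1 - γ) ^ 2 - a ^ 2 := by nlinarith [ha0', hax, h1γ]
  have hd6 : (0:ℝ) < 1 - a ^ 2 := by nlinarith [ha0', ha1]
  have hd7 : (0:ℝ) < 1 - γ - a ^ 2 := by nlinarith [ha0', hax, h1γ]
  have hpbar : ∀ n : ℕ, pbar μ γ nh n = (1 - nh) * ((1 - b) * b ^ n) + nh * ((1 - a) * a ^ n) := by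
    intro n
    simp only [pbar, pbarc, pbarh, ← ha_def, ← hb_def]
  clear_value a
  clear_value b
  -- constants
  set c0 : ℝ := -((1 - nh) * (b / (1 - b)) + nh * (a / (1 - a))) with hc0
  set c2 : ℝ := 2 * (1 - nh) * (b / (1 - b)) with hc2
  set c3 : ℝ := 2 * nh * (a / (1 - a)) with hc3
  clear_value c0 c2 c3
  have habs_b := summable_abs_geom hb0 hb1
  have habs_a := summable_abs_geom ha0' ha1
  have hinner : ∀ i : ℕ, (∑' j : ℕ, |(i:ℝ) - (j:ℝ)| * pbar μ γ nh i * pbar μ γ nh j)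
      = (1 - nh) * (1 - b) * (b ^ i * (1 * i + c0 + c2 * b ^ i + c3 * a ^ i))
        + nh * (1 - a) * (a ^ i * (1 * i + c0 + c2 * b ^ i + c3 * a ^ i)) := by
    intro i
    have e1 : ∀ j : ℕ, |(i:ℝ) - (j:ℝ)| * pbar μ γ nh i * pbar μ γ nh j
        = pbar μ γ nh i * ((1 - nh) * (1 - b) * (|(i:ℝ) - (j:ℝ)| * b ^ j)
            + nh * (1 - a) * (|(i:ℝ) - (j:ℝ)| * a ^ j)) := by
      intro j; rw [hpbar j]; ring
    rw [tsum_congr e1, tsum_mul_left,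
        Summable.tsum_add ((habs_b i).mul_left _) ((habs_a i).mul_left _),
        tsum_mul_left, tsum_mul_left, tsum_abs_geom hb0 hb1 i, tsum_abs_geom ha0' ha1 i,
        hpbar i, hc0, hc2, hc3]
    field_simp
    ring
  have houter : (∑' i : ℕ, ∑' j : ℕ, |(i:ℝ) - (j:ℝ)| * pbar μ γ nh i * pbar μ γ nh j)
      = (1 - nh) * (1 - b) * (1 * (b / (1 - b) ^ 2) + c0 * (1 - b)⁻¹
          + c2 * (1 - b * b)⁻¹ + c3 * (1 - b * a)⁻¹)
        + nh * (1 - a) * (1 * (a / (1 - a) ^ 2) + c0 * (1 - a)⁻¹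
          + c2 * (1 - a * b)⁻¹ + c3 * (1 - a * a)⁻¹) := by
    rw [tsum_congr hinner,
      Summable.tsum_add ((summable_outer hb0 hb1 hb0 hb1 ha0' ha1 1 c0 c2 c3).mul_left _)
        ((summable_outer ha0' ha1 hb0 hb1 ha0' ha1 1 c0 c2 c3).mul_left _),
      tsum_mul_left, tsum_mul_left,
      tsum_outer hb0 hb1 hb0 hb1 ha0' ha1 1 c0 c2 c3,
      tsum_outer ha0' ha1 hb0 hb1 ha0' ha1 1 c0 c2 c3]
  rw [houter, hc0, hc2, hc3,
    stage1 a b nh h1a.ne' h1b.ne' hd2.ne' hd3.ne' hd3'.ne' hd4.ne']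
  -- stage 2: substitute b = a / (1 - γ) and use the quadratic relation for μ
  rw [hb_def]
  have hblt : a / (1 - γ) < 1 := by rw [div_lt_one h1γ]; linarith
  have hbge : (0:ℝ) ≤ a / (1 - γ) := by positivity
  have hne : (1:ℝ) - a / (1 - γ) ≠ 0 := by linarith
  have hM : (1 - nh) * (a / (1 - γ) / (1 - a / (1 - γ))) + nh * (a / (1 - a)) = μ := by
    field_simp
    ring_nf
    nlinarith [hQ, sq_nonneg a]
  rw [hM]
  have hv1 : a / (1 - γ) * (a / (1 - γ)) / (1 - a / (1 - γ) * (a / (1 - γ)))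
      = a ^ 2 / ((1 - γ) ^ 2 - a ^ 2) := by
    have hne2 : (1:ℝ) - a / (1 - γ) * (a / (1 - γ)) ≠ 0 := by nlinarith
    rw [div_eq_div_iff hne2 hd5.ne']
    field_simp
  have hv2 : a * (a / (1 - γ)) / (1 - a * (a / (1 - γ))) = a ^ 2 / (1 - γ - a ^ 2) := by
    have hne2 : (1:ℝ) - a * (a / (1 - γ)) ≠ 0 := by nlinarith
    rw [div_eq_div_iff hne2 hd7.ne']
    field_simp
  have hv3 : a * a / (1 - a * a) = a ^ 2 / (1 - a ^ 2) := by
    rw [div_eq_div_iff hd4.ne' hd6.ne']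
    ring
  rw [hv1, hv2, hv3]
  field_simp
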